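/- Let Γ be a stable graph whose underlying graph is a tree (i.e. h¹(Γ) = 0), with legs carrying integers m̃₁,...,m̃_n satisfying Σ m̃_i = 2g − 2 + n, and with vertex conditions Σ_{h↦v} w(h) = 2g(v) − 2 + n(v) and edge conditions w(h) + w(h′) = 0. Then there exists a unique admissible integer weighting w : H(Γ) → ℤ of Γ. -/

import Mathlib

/-!
Subtracting the extension by zero of the leg values turns an admissible weighting into a *flow*:
a function on half-edges that is antisymmetric under `ι`, hence zero on legs. The vertex-sum map
must then hit a prescribed target whose total is zero, in exactly one way. Surjectivity onto the
sum-zero targets only uses connectedness: the flow of a single edge has vertex sums `δ_x - δ_y`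
for its endpoints, and these generate all sum-zero targets along paths. Injectivity is a dimension
count over `ℚ`: the flows form a space of dimension at most the number of edges, which for a tree
is `|V| - 1`, the dimension of the sum-zero targets.
-/

open Finset Function

namespace HalfEdgeGraph

section Definitions

variable {H V : Type*} [Fintype H] [DecidableEq V] (vmap : H → V) (ι : H → H)

def Adj (x y : V) : Prop := ∃ h, ι h ≠ h ∧ vmap h = x ∧ vmap (ι h) = y

def vertexSum (R : Type*) [CommRing R] : (H → R) →ₗ[R] V → R where
  toFun w u := ∑ h ∈ univ.filter (fun h => vmap h = u), w h
  map_add' _ _ := by ext; simp [sum_add_distrib]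
  map_smul' _ _ := by ext; simp [mul_sum]

def flows (R : Type*) [CommRing R] : Submodule R (H → R) :=
  LinearMap.ker (LinearMap.id + LinearMap.funLeft R R ι)

def edges [DecidableEq H] : Finset (Sym2 H) :=
  (univ.filter (fun h => ι h ≠ h)).image (fun h => s(h, ι h))

end Definitions

variable {H V : Type*} {vmap : H → V} {ι : H → H} {R : Type*} [CommRing R]

theorem mem_flows {w : H → R} : w ∈ flows ι R ↔ ∀ h, w h + w (ι h) = 0 := by
  simp [flows, funext_iff]

theorem mem_flows_iff_legs_edges [NoZeroDivisors R] [NeZero (2 : R)] {w : H → R} :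
    w ∈ flows ι R ↔ (∀ h, ι h = h → w h = 0) ∧ (∀ h, ι h ≠ h → w h + w (ι h) = 0) := by
  rw [mem_flows]
  refine ⟨fun hw => ⟨fun h hh => ?_, fun h _ => hw h⟩, fun ⟨hleg, hedge⟩ h => ?_⟩
  · simpa only [hh, ← two_mul, mul_eq_zero, two_ne_zero, false_or] using hw h
  · by_cases hh : ι h = h
    · simp [hh, hleg h hh]
    · exact hedge h hh

theorem single_sub_single_mem_flows [DecidableEq H] (hι : Involutive ι) (h : H) :
    Pi.single h 1 - Pi.single (ι h) 1 ∈ flows ι R := by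
  rw [mem_flows]
  intro h'
  simp only [Pi.sub_apply, Pi.single_apply, hι.eq_iff, hι h]
  abel

variable [Fintype H] [DecidableEq V]

theorem vertexSum_apply (w : H → R) (u : V) :
    vertexSum vmap R w u = ∑ h ∈ univ.filter (fun h => vmap h = u), w h := rfl

theorem sum_vertexSum [Fintype V] (w : H → R) : ∑ u, vertexSum vmap R w u = ∑ h, w h :=
  sum_fiberwise univ vmap w

theorem vertexSum_single [DecidableEq H] (h : H) :
    vertexSum vmap R (Pi.single h 1) = Pi.single (vmap h) 1 := by
  ext u
  simp [vertexSum_apply, Pi.single_apply, eq_comm]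

variable [DecidableEq H]

theorem single_sub_single_mem_map_vertexSum_flows (hι : Involutive ι)
    (hconn : ∀ u u', Relation.ReflTransGen (Adj vmap ι) u u') (u u' : V) :
    Pi.single u (1 : R) - Pi.single u' 1 ∈ (flows ι R).map (vertexSum vmap R) := by
  induction hconn u u' with
  | refl => simp
  | tail _ hstep ih =>
    obtain ⟨h, -, rfl, rfl⟩ := hstep
    have hedge : Pi.single (vmap h) (1 : R) - Pi.single (vmap (ι h)) 1 ∈
        (flows ι R).map (vertexSum vmap R) :=
      ⟨_, single_sub_single_mem_flows hι h, by simp [vertexSum_single]⟩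
    simpa using add_mem ih hedge

theorem exists_mem_flows_vertexSum_eq [Fintype V] (hι : Involutive ι)
    (hconn : ∀ u u', Relation.ReflTransGen (Adj vmap ι) u u') (t : V → R)
    (ht : ∑ u, t u = 0) : ∃ w ∈ flows ι R, vertexSum vmap R w = t := by
  rcases isEmpty_or_nonempty V with hV | ⟨⟨u₀⟩⟩
  · exact ⟨0, zero_mem _, Subsingleton.elim _ _⟩
  suffices t = ∑ u, t u • (Pi.single u 1 - Pi.single u₀ 1) by
    rw [this]
    exact sum_mem fun u _ =>
      Submodule.smul_mem _ _ (single_sub_single_mem_map_vertexSum_flows hι hconn u u₀)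
  calc t = ∑ u, t u • Pi.single u 1 - (∑ u, t u) • Pi.single u₀ 1 := by
        simp [ht, ← Pi.single_smul', univ_sum_single]
    _ = _ := by simp [smul_sub, sum_sub_distrib, sum_smul]

theorem two_mul_card_edges (hι : Involutive ι) :
    2 * (edges ι).card = (univ.filter (fun h => ι h ≠ h)).card := by
  rw [card_eq_sum_card_image (fun h => s(h, ι h)), edges, mul_comm, ← smul_eq_mul, ← sum_const]
  refine sum_congr rfl fun e he => ?_
  obtain ⟨h₀, h₀E, rfl⟩ := mem_image.mp he
  have h₀E : ι h₀ ≠ h₀ := (mem_filter.mp h₀E).2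
  have hfiber : (univ.filter (fun h => ι h ≠ h)).filter (fun h => s(h, ι h) = s(h₀, ι h₀))
      = {h₀, ι h₀} := by
    ext h
    simp only [mem_filter, mem_univ, true_and, Sym2.eq_iff, mem_insert, mem_singleton]
    constructor
    · rintro ⟨-, ⟨rfl, -⟩ | ⟨rfl, -⟩⟩ <;> simp
    · rintro (rfl | rfl) <;> simp [hι _, h₀E, Ne.symm h₀E]
  rw [hfiber, card_pair h₀E.symm]

section Field

variable {K : Type*} [Field K] [NeZero (2 : K)]

theorem eq_zero_of_mem_flows_of_forall_edges {w : H → K} (hw : w ∈ flows ι K)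
    (hrep : ∀ e : edges ι, w e.1.out.1 = 0) : w = 0 := by
  rw [mem_flows_iff_legs_edges] at hw
  ext h
  by_cases hh : ι h = h
  · exact hw.1 h hh
  · have he : s(h, ι h) ∈ edges ι := mem_image.mpr ⟨h, by simpa using hh, rfl⟩
    have := hrep ⟨_, he⟩
    rcases Sym2.mem_iff.mp (Sym2.out_fst_mem s(h, ι h)) with hout | hout <;> rw [hout] at this
    · exact this
    · simpa [this] using hw.2 h hh

theorem finrank_flows_le : Module.finrank K (flows ι K) ≤ (edges ι).card := by
  rw [← Fintype.card_coe, ← Module.finrank_fintype_fun_eq_card K]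
  refine LinearMap.finrank_le_finrank_of_injective
    (f := LinearMap.funLeft K K (fun e : edges ι => e.1.out.1) ∘ₗ (flows ι K).subtype) ?_
  rw [← LinearMap.ker_eq_bot, LinearMap.ker_eq_bot']
  intro w hw
  exact Subtype.ext (eq_zero_of_mem_flows_of_forall_edges w.2 fun e => congrFun hw e)

theorem eq_zero_of_mem_flows_of_vertexSum_eq_zero [Fintype V] (hι : Involutive ι)
    (hconn : ∀ u u', Relation.ReflTransGen (Adj vmap ι) u u')
    (htree : (univ.filter (fun h => ι h ≠ h)).card + 2 = 2 * Fintype.card V)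
    {w : H → K} (hw : w ∈ flows ι K) (hdiv : vertexSum vmap K w = 0) : w = 0 := by
  set D := vertexSum vmap K ∘ₗ (flows ι K).subtype
  set S : (V → K) →ₗ[K] K := ∑ u, LinearMap.proj (φ := fun _ => K) u
  have hkerS : Fintype.card V ≤ Module.finrank K (LinearMap.ker S) + 1 := by
    have := LinearMap.finrank_range_add_finrank_ker S
    have := Submodule.finrank_le (LinearMap.range S)
    rw [Module.finrank_self] at this
    rw [Module.finrank_fintype_fun_eq_card] at *
    omega
  have hsurj : LinearMap.ker S ≤ LinearMap.range D := by
    intro t ht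
    obtain ⟨w, hw, rfl⟩ := exists_mem_flows_vertexSum_eq hι hconn t (by simpa [S] using ht)
    exact ⟨⟨w, hw⟩, rfl⟩
  -- dim range D + dim ker D = dim flows ≤ |edges| = |V| - 1 ≤ dim ker S ≤ dim range D
  have hker : Module.finrank K (LinearMap.ker D) = 0 := by
    have := LinearMap.finrank_range_add_finrank_ker D
    have := Submodule.finrank_mono hsurj
    have := finrank_flows_le (ι := ι) (K := K)
    have := two_mul_card_edges hι
    omega
  have : (⟨w, hw⟩ : flows ι K) ∈ LinearMap.ker D := hdiv
  rw [Submodule.finrank_eq_zero.mp hker] at this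
  simpa using this

end Field

variable [Fintype V]

theorem eq_zero_of_mem_flows_of_vertexSum_eq_zero_int (hι : Involutive ι)
    (hconn : ∀ u u', Relation.ReflTransGen (Adj vmap ι) u u')
    (htree : (univ.filter (fun h => ι h ≠ h)).card + 2 = 2 * Fintype.card V)
    {w : H → ℤ} (hw : w ∈ flows ι ℤ) (hdiv : vertexSum vmap ℤ w = 0) : w = 0 := by
  have hℚ : (fun h => (w h : ℚ)) = 0 := by
    refine eq_zero_of_mem_flows_of_vertexSum_eq_zero hι hconn htree ?_ ?_
    · rw [mem_flows] at hw ⊢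
      exact fun h => by exact_mod_cast hw h
    · ext u
      simpa [vertexSum_apply] using congrArg (fun t : V → ℤ => (t u : ℚ)) hdiv
  ext h
  simpa using congrFun hℚ h

theorem existsUnique_weighting_vertexSum_eq (hι : Involutive ι)
    (hconn : ∀ u u', Relation.ReflTransGen (Adj vmap ι) u u')
    (htree : (univ.filter (fun h => ι h ≠ h)).card + 2 = 2 * Fintype.card V)
    (m : H → ℤ) (τ : V → ℤ) (hτ : ∑ u, τ u = ∑ h ∈ univ.filter (fun h => ι h = h), m h) :
    ∃! w : H → ℤ, (∀ h, ι h = h → w h = m h) ∧ (∀ h, ι h ≠ h → w h + w (ι h) = 0) ∧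
      vertexSum vmap ℤ w = τ := by
  set w₀ : H → ℤ := fun h => if ι h = h then m h else 0
  obtain ⟨f, hf, hfτ⟩ := exists_mem_flows_vertexSum_eq hι hconn (τ - vertexSum vmap ℤ w₀)
    (by simp [sum_sub_distrib, sum_vertexSum, hτ, w₀, sum_ite])
  rw [mem_flows_iff_legs_edges] at hf
  refine ⟨f + w₀, ⟨fun h hh => ?_, fun h hh => ?_, by simp [hfτ]⟩, ?_⟩
  · simp [w₀, hh, hf.1 h hh]
  · simp [w₀, hh, hι h, Ne.symm hh, hf.2 h hh]
  · rintro y ⟨hleg, hedge, hyτ⟩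
    refine sub_eq_zero.mp (eq_zero_of_mem_flows_of_vertexSum_eq_zero_int hι hconn htree
      (mem_flows_iff_legs_edges.mpr ⟨fun h hh => ?_, fun h hh => ?_⟩) (by simp [hyτ, hfτ]))
    · simp [w₀, hh, hleg h hh, hf.1 h hh]
    · simp only [Pi.sub_apply, Pi.add_apply, w₀, if_neg hh, hι h, if_neg (Ne.symm hh)]
      linarith [hedge h hh, hf.2 h hh]

end HalfEdgeGraph

theorem tree_admissible_weighting_exists_unique_general
    (H V : Type*) [Fintype H] [DecidableEq H] [Fintype V] [DecidableEq V]
    (vmap : H → V) (ι : H → H) (hι : ∀ h, ι (ι h) = h)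
    (hconn : ∀ u u' : V, Relation.ReflTransGen
      (fun x y => ∃ h, ι h ≠ h ∧ vmap h = x ∧ vmap (ι h) = y) u u')
    (htree : (Finset.univ.filter (fun h : H => ι h ≠ h)).card + 2
      = 2 * Fintype.card V)
    (m : H → ℤ) (gv : V → ℤ)
    (hsum : ∑ h ∈ Finset.univ.filter (fun h : H => ι h = h), m h
      = 2 * (∑ v, gv v) - 2 + (Finset.univ.filter (fun h : H => ι h = h)).card) :
    ∃! w : H → ℤ,
      (∀ h, ι h = h → w h = m h) ∧
      (∀ h, ι h ≠ h → w h + w (ι h) = 0) ∧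
      (∀ u : V, ∑ h ∈ Finset.univ.filter (fun h => vmap h = u), w h
        = 2 * gv u - 2
          + (Finset.univ.filter (fun h => vmap h = u)).card) := by
  have hdeg : ∑ u, ((univ.filter fun h => vmap h = u).card : ℤ) = Fintype.card H := by
    exact_mod_cast (card_eq_sum_card_fiberwise fun h _ => mem_univ (vmap h)).symm
  have hlegs : ((univ.filter fun h => ι h = h).card : ℤ) + (univ.filter fun h => ι h ≠ h).card
      = Fintype.card H := by
    exact_mod_cast card_filter_add_card_filter_not (s := univ) (p := fun h : H => ι h = h)
  have htreeℤ : ((univ.filter fun h => ι h ≠ h).card : ℤ) + 2 = 2 * Fintype.card V := by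
    exact_mod_cast htree
  have hτ : ∑ u, (2 * gv u - 2 + ((univ.filter fun h => vmap h = u).card : ℤ))
      = ∑ h ∈ univ.filter (fun h => ι h = h), m h := by
    rw [sum_add_distrib, sum_sub_distrib, ← mul_sum, hdeg, hsum, sum_const, card_univ, nsmul_eq_mul]
    linarith
  simpa only [funext_iff, HalfEdgeGraph.vertexSum_apply] using
    HalfEdgeGraph.existsUnique_weighting_vertexSum_eq hι hconn htree m _ hτ

/-- On a stable graph which is a tree (connected, with `h¹ = 0`, i.e.
`#{non-fixed half-edges} + 2 = 2|V|`), given leg values `m̃` whose total equals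
`2g − 2 + n` (where `g = Σ_v g(v)` and `n` is the number of legs), there is a
unique admissible integer weighting of the half-edges. -/
theorem tree_admissible_weighting_exists_unique
    (H V : Type*) [Fintype H] [DecidableEq H] [Fintype V] [DecidableEq V]
    (vmap : H → V) (ι : H → H) (hι : ∀ h, ι (ι h) = h)
    (hconn : ∀ u u' : V, Relation.ReflTransGen
      (fun x y => ∃ h, ι h ≠ h ∧ vmap h = x ∧ vmap (ι h) = y) u u')
    (htree : (Finset.univ.filter (fun h : H => ι h ≠ h)).card + 2
      = 2 * Fintype.card V)
    (m : H → ℤ) (gv : V → ℤ) (hgv : ∀ v, 0 ≤ gv v)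
    (hsum : ∑ h ∈ Finset.univ.filter (fun h : H => ι h = h), m h
      = 2 * (∑ v, gv v) - 2 + (Finset.univ.filter (fun h : H => ι h = h)).card) :
    ∃! w : H → ℤ,
      (∀ h, ι h = h → w h = m h) ∧
      (∀ h, ι h ≠ h → w h + w (ι h) = 0) ∧
      (∀ u : V, ∑ h ∈ Finset.univ.filter (fun h => vmap h = u), w h
        = 2 * gv u - 2
          + (Finset.univ.filter (fun h => vmap h = u)).card) :=
  tree_admissible_weighting_exists_unique_general H V vmap ι hι hconn htree m gv hsum
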